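/- arXiv:0806.3626 — 3 statements merged into one kernel-verified Lean document; each statement's English description precedes it below -/
import Mathlib

section
/- Let f : ℕ → ℚ be a sequence with f(i) ≠ 0 for all i ≥ 1. Let s ≥ 1 and let (k_1, …, k_s) be a tuple of positive natural numbers with k_1 + … + k_s = n, and suppose λ_1, …, λ_s ∈ ℚ satisfy f(n) = λ_1·f(k_1) + … + λ_s·f(k_s). Then the multi F-nomial coefficient satisfies the recurrence f!(n)/(f!(k_1)⋯f!(k_s)) = Σ_{j=1}^{s} λ_j · f!(n−1)/(f!(k_1)⋯f!(k_{j−1})·f!(k_j − 1)·f!(k_{j+1})⋯f!(k_s)). -/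
/-!
Write `P = ∏ⱼ f!(kⱼ)` and `Pⱼ` for the product with `kⱼ` replaced by `kⱼ - 1`. Since every
`kⱼ ≥ 1`, `f!(kⱼ) = f(kⱼ) · f!(kⱼ - 1)` gives `P = f(kⱼ) · Pⱼ`, so the `j`-th summand equals
`λⱼ f(kⱼ) f!(n-1) / P`. Summing and using `f(n) = Σ λⱼ f(kⱼ)` yields `f(n) f!(n-1) / P = f!(n) / P`,
where `n ≥ 1` because `s ≥ 1`.
-/

/-- The F-factorial of a rational-valued sequence: `ffact f n = ∏_{i=1}^{n} f i`. -/
def ffact (f : ℕ → ℚ) (n : ℕ) : ℚ := ∏ i ∈ Finset.range n, f (i + 1)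

open Finset Function

theorem ffact_succ (f : ℕ → ℚ) (m : ℕ) : ffact f (m + 1) = f (m + 1) * ffact f m := by
  rw [ffact, prod_range_succ, mul_comm, ffact]

theorem ffact_eq_mul_ffact_sub_one (f : ℕ → ℚ) {m : ℕ} (hm : 1 ≤ m) :
    ffact f m = f m * ffact f (m - 1) := by
  obtain ⟨m, rfl⟩ := Nat.exists_eq_add_of_le' hm
  exact ffact_succ f m

theorem prod_ffact_eq_mul_prod_ffact_update {ι : Type*} [Fintype ι] [DecidableEq ι]
    (f : ℕ → ℚ) (k : ι → ℕ) {j : ι} (hj : 1 ≤ k j) :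
    ∏ i, ffact f (k i) = f (k j) * ∏ i, ffact f (update k j (k j - 1) i) := by
  simp_rw [apply_update (fun _ m => ffact f m) k j (k j - 1)]
  rw [prod_update_of_mem (mem_univ j), prod_eq_mul_prod_sdiff_singleton j _ (absurd (mem_univ j)),
    ffact_eq_mul_ffact_sub_one f hj, mul_assoc]

/-- Recurrence for multi F-nomial coefficients: if `k₁ + ⋯ + k_s = n` is a composition into
`s ≥ 1` positive parts and `f n = λ₁·f k₁ + ⋯ + λ_s·f k_s`, then
`f!(n)/(f!(k₁)⋯f!(k_s)) = Σ_j λ_j · f!(n-1)/(f!(k₁)⋯f!(k_j - 1)⋯f!(k_s))`. -/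
theorem multi_Fnomial_recurrence (f : ℕ → ℚ) (hf : ∀ i : ℕ, 1 ≤ i → f i ≠ 0)
    (n s : ℕ) (hs : 1 ≤ s) (k : Fin s → ℕ) (hk : ∀ j, 1 ≤ k j) (hsum : (∑ j, k j) = n)
    (lam : Fin s → ℚ) (hlam : f n = ∑ j, lam j * f (k j)) :
    ffact f n / ∏ j, ffact f (k j) =
      ∑ j, lam j * (ffact f (n - 1) / ∏ i, ffact f (Function.update k j (k j - 1) i)) := by
  have hn : 1 ≤ n := by
    let j₀ : Fin s := ⟨0, hs⟩
    calc 1 ≤ k j₀ := hk j₀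
      _ ≤ n := hsum ▸ single_le_sum (fun _ _ => Nat.zero_le _) (mem_univ j₀)
  have summand (j : Fin s) :
      lam j * (ffact f (n - 1) / ∏ i, ffact f (update k j (k j - 1) i)) =
        lam j * f (k j) * ffact f (n - 1) / ∏ i, ffact f (k i) := by
    rw [prod_ffact_eq_mul_prod_ffact_update f k (hk j), mul_assoc, mul_div_assoc,
      mul_div_mul_left _ _ (hf _ (hk j))]
  rw [sum_congr rfl fun j _ => summand j, ← sum_div, ← sum_mul, ← hlam,
    ffact_eq_mul_ffact_sub_one f hn]
end

section
/- Let f : ℕ → ℚ be a sequence with f(i) ≠ 0 for all i ≥ 1. Define B_f(n,n) = 1 and, for k < n, B_f(n,k) = Σ_{s=1}^{n−k} (−1)^s Σ_{(k_1,…,k_s) composition of n−k into s positive parts} f!(n)/(f!(k)·f!(k_1)⋯f!(k_s)). Then for all natural numbers k ≤ n: Σ_{s=k}^{n} C_f(n,s) · B_f(s,k) = 1 if n = k, and = 0 if n > k. That is, the matrix (B_f(n,k)) is a right inverse of the matrix of F-nomial coefficients (C_f(n,k)). -/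
/-- Compositions of `m` into `s` positive parts, as tuples `Fin s → ℕ`. -/
def comps (s m : ℕ) : Finset (Fin s → ℕ) :=
  (Finset.Nat.antidiagonalTuple s m).filter fun k => ∀ j, 1 ≤ k j

/-- The F-nomial coefficient `C_f(n,k) = f!(n)/(f!(k)·f!(n-k))`. -/
def Cf (f : ℕ → ℚ) (n k : ℕ) : ℚ := ffact f n / (ffact f k * ffact f (n - k))

/-- The candidate inverse array: `B_f(n,n) = 1` and for `k < n`,
`B_f(n,k) = Σ_{s=1}^{n-k} (-1)^s Σ_{compositions of n-k} f!(n)/(f!(k)·f!(k₁)⋯f!(k_s))`. -/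
def Bf (f : ℕ → ℚ) (n k : ℕ) : ℚ :=
  if n = k then 1 else
    ∑ s ∈ Finset.Icc 1 (n - k), (-1 : ℚ) ^ s *
      ∑ c ∈ comps s (n - k), ffact f n / (ffact f k * ∏ j, ffact f (c j))

lemma mem_comps {s m : ℕ} {c : Fin s → ℕ} :
    c ∈ comps s m ↔ (∑ i, c i = m) ∧ ∀ j, 1 ≤ c j := by
  simp [comps, Finset.Nat.mem_antidiagonalTuple]

lemma ffact_ne_zero (f : ℕ → ℚ) (hf : ∀ i : ℕ, 1 ≤ i → f i ≠ 0) (n : ℕ) :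
    ffact f n ≠ 0 :=
  Finset.prod_ne_zero_iff.mpr fun i _ => hf (i + 1) (Nat.le_add_left _ _)

lemma comps_empty_of_lt {s m : ℕ} (h : m < s) : comps s m = ∅ := by
  ext c
  simp only [Finset.notMem_empty, iff_false, mem_comps, not_and]
  intro hs hp
  have : (s : ℕ) ≤ ∑ i, c i := by
    calc (s : ℕ) = ∑ _i : Fin s, 1 := by simp
    _ ≤ ∑ i, c i := Finset.sum_le_sum fun i _ => hp i
  omega

lemma comps_zero_succ (m : ℕ) (hm : 1 ≤ m) : comps 0 m = ∅ := by
  ext c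
  simp only [Finset.notMem_empty, iff_false, mem_comps, not_and]
  intro hs
  simp only [Finset.univ_eq_empty, Finset.sum_empty] at hs
  omega

/-- Decomposition of a sum over compositions into `t+1` parts by the first part. -/
lemma sum_comps_succ (w : ℕ → ℚ) (t m : ℕ) :
    ∑ c ∈ comps (t + 1) m, ∏ j, w (c j)
      = ∑ j ∈ Finset.Icc 1 m, w j * ∑ c ∈ comps t (m - j), ∏ i, w (c i) := by
  simp_rw [Finset.mul_sum]
  rw [Finset.sum_sigma']
  refine Finset.sum_nbij' (fun c => ⟨c 0, Fin.tail c⟩) (fun p => Fin.cons p.1 p.2)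
    ?_ ?_ ?_ ?_ ?_
  · intro c hc
    obtain ⟨hs, hp⟩ := mem_comps.mp hc
    rw [Fin.sum_univ_succ] at hs
    have h0 : 1 ≤ c 0 := hp 0
    simp only [Finset.mem_sigma, Finset.mem_Icc, mem_comps]
    refine ⟨⟨h0, by omega⟩, ?_, fun j => hp j.succ⟩
    have ht : ∑ i, Fin.tail c i = ∑ i : Fin t, c i.succ := rfl
    rw [ht]
    omega
  · rintro ⟨j, d⟩ hp
    simp only [Finset.mem_sigma, Finset.mem_Icc, mem_comps] at hp ⊢
    obtain ⟨⟨hj1, hjm⟩, hs, hpos⟩ := hp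
    constructor
    · rw [Fin.sum_univ_succ]
      simp only [Fin.cons_zero, Fin.cons_succ]
      omega
    · intro i
      refine Fin.cases ?_ ?_ i <;> simp [hj1, hpos]
  · intro c _
    exact Fin.cons_self_tail c
  · rintro ⟨j, d⟩ _
    simp [Fin.tail_cons]
  · intro c hc
    rw [Fin.prod_univ_succ]
    rfl

/-- The "alternating composition sum" `A_f(m)`. -/
def Af (f : ℕ → ℚ) (m : ℕ) : ℚ :=
  ∑ t ∈ Finset.range (m + 1), (-1 : ℚ) ^ t * ∑ c ∈ comps t m, ∏ j, (ffact f (c j))⁻¹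

lemma Af_zero (f : ℕ → ℚ) : Af f 0 = 1 := by
  have h : comps 0 0 = {![]} := by
    ext c
    simp [mem_comps, Matrix.empty_eq]
  simp [Af, h]

lemma Af_eq_sum_range (f : ℕ → ℚ) {m M : ℕ} (h : m ≤ M) :
    Af f m = ∑ t ∈ Finset.range (M + 1), (-1 : ℚ) ^ t * ∑ c ∈ comps t m, ∏ j, (ffact f (c j))⁻¹ := by
  rw [Af]
  refine Finset.sum_subset ?_ ?_
  · intro t ht
    simp only [Finset.mem_range] at *
    omega
  · intro t ht ht'
    simp only [Finset.mem_range] at *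
    rw [comps_empty_of_lt (by omega)]
    simp

lemma Af_rec (f : ℕ → ℚ) (m : ℕ) (hm : 1 ≤ m) :
    Af f m = -∑ j ∈ Finset.Icc 1 m, (ffact f j)⁻¹ * Af f (m - j) := by
  rw [Af, Finset.sum_range_succ']
  rw [comps_zero_succ m hm]
  simp only [Finset.sum_empty, mul_zero, add_zero]
  have : ∀ t ∈ Finset.range m,
      (-1 : ℚ) ^ (t + 1) * ∑ c ∈ comps (t + 1) m, ∏ j, (ffact f (c j))⁻¹
      = ∑ j ∈ Finset.Icc 1 m,
          (-((ffact f j)⁻¹)) * ((-1 : ℚ) ^ t * ∑ c ∈ comps t (m - j), ∏ i, (ffact f (c i))⁻¹) := by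
    intro t _
    rw [sum_comps_succ (fun n => (ffact f n)⁻¹) t m, Finset.mul_sum]
    refine Finset.sum_congr rfl fun j _ => by ring
  rw [Finset.sum_congr rfl this, Finset.sum_comm, ← Finset.sum_neg_distrib]
  refine Finset.sum_congr rfl fun j hj => ?_
  obtain ⟨hj1, hjm⟩ := Finset.mem_Icc.mp hj
  have hMm : m - j ≤ m - 1 := by omega
  rw [Af_eq_sum_range f hMm]
  have hm1 : m - 1 + 1 = m := by omega
  rw [hm1, Finset.mul_sum, ← Finset.sum_neg_distrib]
  refine Finset.sum_congr rfl fun t _ => by ring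

lemma key_identity (f : ℕ → ℚ) (m : ℕ) :
    ∑ r ∈ Finset.range (m + 1), Af f r * (ffact f (m - r))⁻¹
      = if m = 0 then 1 else 0 := by
  rcases Nat.eq_zero_or_pos m with hm | hm
  · subst hm
    simp [Af_zero, ffact]
  · rw [if_neg (by omega)]
    rw [Finset.sum_range_succ, Nat.sub_self]
    have h0 : (ffact f 0)⁻¹ = 1 := by simp [ffact]
    rw [h0, mul_one]
    have hre : ∑ r ∈ Finset.range m, Af f r * (ffact f (m - r))⁻¹
        = ∑ j ∈ Finset.Icc 1 m, (ffact f j)⁻¹ * Af f (m - j) := by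
      refine Finset.sum_nbij' (fun r => m - r) (fun j => m - j) ?_ ?_ ?_ ?_ ?_
      · intro r hr; simp only [Finset.mem_range] at hr; simp only [Finset.mem_Icc]; omega
      · intro j hj; simp only [Finset.mem_Icc] at hj; simp only [Finset.mem_range]; omega
      · intro r hr; simp only [Finset.mem_range] at hr; omega
      · intro j hj; simp only [Finset.mem_Icc] at hj; omega
      · intro r hr
        simp only [Finset.mem_range] at hr
        have : m - (m - r) = r := by omega
        rw [this, mul_comm]
    rw [hre, Af_rec f m hm]
    ring

lemma Bf_eq (f : ℕ → ℚ) (hf : ∀ i : ℕ, 1 ≤ i → f i ≠ 0) (k r : ℕ) :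
    Bf f (k + r) k = ffact f (k + r) / ffact f k * Af f r := by
  rcases Nat.eq_zero_or_pos r with hr | hr
  · subst hr
    rw [Bf, if_pos (by omega), Af_zero, mul_one, Nat.add_zero,
      div_self (ffact_ne_zero f hf k)]
  · rw [Bf, if_neg (by omega)]
    have hsub : k + r - k = r := by omega
    rw [hsub]
    have hterm : ∀ s : ℕ, ∀ c : Fin s → ℕ,
        ffact f (k + r) / (ffact f k * ∏ j, ffact f (c j))
          = ffact f (k + r) / ffact f k * ∏ j, (ffact f (c j))⁻¹ := by
      intro s c
      rw [division_def, division_def, mul_inv, ← mul_assoc, Finset.prod_inv_distrib]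
    have hAf : Af f r = ∑ s ∈ Finset.Icc 1 r, (-1 : ℚ) ^ s *
        ∑ c ∈ comps s r, ∏ j, (ffact f (c j))⁻¹ := by
      rw [Af]
      have hins : Finset.range (r + 1) = insert 0 (Finset.Icc 1 r) := by
        ext t; simp only [Finset.mem_range, Finset.mem_insert, Finset.mem_Icc]; omega
      rw [hins, Finset.sum_insert (by simp)]
      rw [comps_zero_succ r hr]
      simp
    rw [hAf, Finset.mul_sum]
    refine Finset.sum_congr rfl fun s _ => ?_
    rw [Finset.mul_sum, Finset.mul_sum, Finset.mul_sum]
    refine Finset.sum_congr rfl fun c _ => ?_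
    rw [hterm s c]
    ring

/-- The matrix `B_f` is a right inverse of the matrix of F-nomial coefficients:
`Σ_{s=k}^{n} C_f(n,s) · B_f(s,k) = δ_{n,k}` for all `k ≤ n`. -/
theorem Fnomial_right_inverse (f : ℕ → ℚ) (hf : ∀ i : ℕ, 1 ≤ i → f i ≠ 0)
    (n k : ℕ) (hkn : k ≤ n) :
    (∑ s ∈ Finset.Icc k n, Cf f n s * Bf f s k) = if n = k then 1 else 0 := by
  set m := n - k with hm
  have hnm : n = k + m := by omega
  have hre : ∑ s ∈ Finset.Icc k n, Cf f n s * Bf f s k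
      = ∑ r ∈ Finset.range (m + 1), Cf f n (k + r) * Bf f (k + r) k := by
    refine Finset.sum_nbij' (fun s => s - k) (fun r => k + r) ?_ ?_ ?_ ?_ ?_
    · intro s hs; simp only [Finset.mem_Icc] at hs; simp only [Finset.mem_range]; omega
    · intro r hr; simp only [Finset.mem_range] at hr; simp only [Finset.mem_Icc]; omega
    · intro s hs; simp only [Finset.mem_Icc] at hs; omega
    · intro r hr; omega
    · intro s hs
      simp only [Finset.mem_Icc] at hs
      have : k + (s - k) = s := by omega
      rw [this]
  rw [hre]
  have hterm : ∀ r ∈ Finset.range (m + 1),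
      Cf f n (k + r) * Bf f (k + r) k
        = (ffact f n / ffact f k) * (Af f r * (ffact f (m - r))⁻¹) := by
    intro r hr
    simp only [Finset.mem_range] at hr
    rw [Bf_eq f hf k r, Cf]
    have hsub : n - (k + r) = m - r := by omega
    rw [hsub]
    have ha : ffact f (k + r) ≠ 0 := ffact_ne_zero f hf (k + r)
    simp only [division_def, mul_inv]
    linear_combination (ffact f n * Af f r * (ffact f (m - r))⁻¹ * (ffact f k)⁻¹) *
      mul_inv_cancel₀ ha
  rw [Finset.sum_congr rfl hterm, ← Finset.mul_sum, key_identity]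
  rcases Nat.eq_or_lt_of_le hkn with h | h
  · have : n = k := h.symm
    rw [if_pos this, if_pos (by omega)]
    rw [this, mul_one, div_self (ffact_ne_zero f hf k)]
  · rw [if_neg (by omega), if_neg (by omega), mul_zero]
end

section
/- Let q be a real number with q > 0 and q ≠ 1. Then for every natural number n and every real number x: x^n = Σ_{k=0}^{n} binom(n,k)_q · ∏_{s=0}^{k−1} (x − q^s). -/
/-- The q-integer `[n]_q = (q^n - 1)/(q - 1)`. -/
noncomputable def qint (q : ℝ) (n : ℕ) : ℝ := (q ^ n - 1) / (q - 1)

/-- The q-factorial `[n]_q! = ∏_{i=1}^{n} [i]_q`. -/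
noncomputable def qfact (q : ℝ) (n : ℕ) : ℝ := ∏ i ∈ Finset.range n, qint q (i + 1)

/-- The Gaussian (q-binomial) coefficient `binom(n,k)_q = [n]_q!/([k]_q!·[n-k]_q!)`. -/
noncomputable def qbinom (q : ℝ) (n k : ℕ) : ℝ := qfact q n / (qfact q k * qfact q (n - k))

lemma qint_ne_zero {q : ℝ} (hq : 0 < q) (hq1 : q ≠ 1) {m : ℕ} (hm : m ≠ 0) :
    qint q m ≠ 0 := by
  have hnum : q ^ m ≠ 1 := by
    rcases lt_or_gt_of_ne hq1 with h | h
    · exact ne_of_lt (pow_lt_one₀ hq.le h hm)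
    · exact ne_of_gt (one_lt_pow₀ h hm)
  exact div_ne_zero (sub_ne_zero.mpr hnum) (sub_ne_zero.mpr hq1)

lemma qfact_ne_zero {q : ℝ} (hq : 0 < q) (hq1 : q ≠ 1) (n : ℕ) : qfact q n ≠ 0 := by
  unfold qfact
  exact Finset.prod_ne_zero_iff.mpr fun i _ => qint_ne_zero hq hq1 (Nat.succ_ne_zero i)

lemma qfact_succ (q : ℝ) (n : ℕ) : qfact q (n + 1) = qfact q n * qint q (n + 1) := by
  unfold qfact; rw [Finset.prod_range_succ]

lemma qbinom_self (q : ℝ) (hq : 0 < q) (hq1 : q ≠ 1) (n : ℕ) : qbinom q n n = 1 := by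
  unfold qbinom
  rw [Nat.sub_self]
  have h0 : qfact q 0 = 1 := by simp [qfact]
  rw [h0, mul_one, div_self (qfact_ne_zero hq hq1 n)]

lemma qbinom_zero (q : ℝ) (hq : 0 < q) (hq1 : q ≠ 1) (n : ℕ) : qbinom q n 0 = 1 := by
  unfold qbinom
  have h0 : qfact q 0 = 1 := by simp [qfact]
  rw [Nat.sub_zero, h0, one_mul, div_self (qfact_ne_zero hq hq1 n)]

lemma qpascal {q : ℝ} (hq : 0 < q) (hq1 : q ≠ 1) {k n : ℕ} (hk : k < n) :
    qbinom q (n + 1) (k + 1) = qbinom q n k + q ^ (k + 1) * qbinom q n (k + 1) := by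
  obtain ⟨c, rfl⟩ : ∃ c, n = k + c + 1 := ⟨n - k - 1, by omega⟩
  have hI : qint q (k + c + 2) = qint q (k + 1) + q ^ (k + 1) * qint q (c + 1) := by
    unfold qint
    field_simp
    ring
  unfold qbinom
  have h1 : k + c + 1 + 1 - (k + 1) = c + 1 := by omega
  have h2 : k + c + 1 - k = c + 1 := by omega
  have h3 : k + c + 1 - (k + 1) = c := by omega
  rw [h1, h2, h3]
  have e1 : qfact q (k + c + 1 + 1) = qfact q (k + c + 1) * qint q (k + c + 2) := by
    rw [qfact_succ]
  have e2 : qfact q (k + 1) = qfact q k * qint q (k + 1) := qfact_succ q k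
  have e3 : qfact q (c + 1) = qfact q c * qint q (c + 1) := qfact_succ q c
  rw [e1, e2, e3, hI]
  have hfk := qfact_ne_zero hq hq1 k
  have hfc := qfact_ne_zero hq hq1 c
  have hik := qint_ne_zero hq hq1 (Nat.succ_ne_zero k)
  have hic := qint_ne_zero hq hq1 (Nat.succ_ne_zero c)
  field_simp

/-- Expansion of powers in the q-polynomials `Φ_k(x) = ∏_{s=0}^{k-1}(x - q^s)`:
`x^n = Σ_{k=0}^{n} binom(n,k)_q · ∏_{s=0}^{k-1} (x - q^s)`. -/
theorem pow_eq_sum_qbinom (q : ℝ) (hq : 0 < q) (hq1 : q ≠ 1) (n : ℕ) (x : ℝ) :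
    x ^ n = ∑ k ∈ Finset.range (n + 1),
      qbinom q n k * ∏ s ∈ Finset.range k, (x - q ^ s) := by
  induction n with
  | zero => simp [qbinom, qfact]
  | succ n ih =>
    have key : x ^ (n + 1)
        = ∑ k ∈ Finset.range (n + 1), qbinom q n k *
            ((∏ s ∈ Finset.range (k + 1), (x - q ^ s))
              + q ^ k * ∏ s ∈ Finset.range k, (x - q ^ s)) := by
      rw [pow_succ, ih, Finset.sum_mul]
      refine Finset.sum_congr rfl fun k _ => ?_
      rw [Finset.prod_range_succ]
      ring
    rw [key]
    simp only [mul_add, Finset.sum_add_distrib]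
    -- split both sums and the target
    rw [Finset.sum_range_succ (fun k => qbinom q n k * ∏ s ∈ Finset.range (k+1), (x - q^s)) n,
        Finset.sum_range_succ' (fun k => qbinom q n k * (q ^ k * ∏ s ∈ Finset.range k, (x - q^s))) n,
        Finset.sum_range_succ (fun k => qbinom q (n+1) k * ∏ s ∈ Finset.range k, (x - q^s)) (n+1)]
    rw [Finset.sum_range_succ' (fun k => qbinom q (n+1) k * ∏ s ∈ Finset.range k, (x - q^s)) n]
    simp only [qbinom_self q hq hq1, qbinom_zero q hq hq1, pow_zero, Finset.range_zero,
      Finset.prod_empty, mul_one, one_mul]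
    have hmid : ∀ k ∈ Finset.range n,
        qbinom q (n + 1) (k + 1) * ∏ s ∈ Finset.range (k + 1), (x - q ^ s)
        = qbinom q n k * ∏ s ∈ Finset.range (k + 1), (x - q ^ s)
          + qbinom q n (k + 1) * (q ^ (k + 1) * ∏ s ∈ Finset.range (k + 1), (x - q ^ s)) := by
      intro k hk
      rw [qpascal hq hq1 (Finset.mem_range.mp hk)]
      ring
    rw [Finset.sum_congr rfl hmid, Finset.sum_add_distrib]
    ring
end
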